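/- arXiv:2103.10059 — 3 statements merged into one kernel-verified Lean document; each statement's English description precedes it below -/
import Mathlib

section
/- Let E be a complex separable Hilbert space and let (A_{m,n})_{m,n≥0} be bounded operators on E such that for all z,w in the open unit disc 𝔻 the double series κ(z,w) = Σ_{m,n≥0} A_{m,n} z^m·conj(w)^n converges absolutely in operator norm. Then κ is a positive semi-definite kernel (i.e., for every finite collection z_1,…,z_N ∈ 𝔻 and c_1,…,c_N ∈ E one has Σ_{i,j=1}^N ⟨κ(z_j, z_i)c_i, c_j⟩ ≥ 0) if and only if the family (A_{m,n})_{m,n≥0} is formally positive semi-definite (i.e., for every N ≥ 0 and all x_0,…,x_N ∈ E one has Σ_{m,n=0}^N ⟨A_{m,n} x_n, x_m⟩ ≥ 0). -/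
/-!
Writing `xₘ = ∑ⱼ conj(zⱼ)ᵐ cⱼ`, the quadratic form of the kernel at points `zⱼ ∈ 𝔻` is the sum
of the absolutely convergent double series `∑ₘₙ ⟪xₘ, Aₘₙ xₙ⟫`; its square partial sums are
nonnegative when the coefficients are, which gives one direction. Conversely, given `x₀, …, x_N`
put `K = N + 1` and sample the kernel at the `K` points `r e^{-2πij/K}` with coefficients the
discrete Fourier transform of `(r⁻ᵖ xₚ)ₚ`. By Fourier inversion the moments are then
`r^{K⌊m/K⌋} x_{m mod K}`: the finite sequence with its aliases damped by powers of `r`, so that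
as `r → 0` the quadratic form tends, by dominated convergence, to `∑_{m,n ≤ N} ⟪xₘ, Aₘₙ xₙ⟫`.
-/

open scoped ComplexConjugate ComplexInnerProductSpace ComplexOrder
open Complex ContinuousLinearMap

noncomputable section

local notation "𝔻" => Metric.ball (0:ℂ) 1

open Filter Topology Finset
open scoped ZMod

section

variable {E : Type*} [NormedAddCommGroup E] [InnerProductSpace ℂ E]

theorem hasSum_inner_tsum_smul_apply [CompleteSpace E] (A : ℕ → ℕ → E →L[ℂ] E) {z w : ℂ}
    (hzw : Summable fun mn : ℕ × ℕ => ‖A mn.1 mn.2‖ * ‖z‖ ^ mn.1 * ‖w‖ ^ mn.2) (u v : E) :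
    HasSum (fun mn : ℕ × ℕ => z ^ mn.1 * conj w ^ mn.2 * ⟪u, A mn.1 mn.2 v⟫)
      ⟪u, (∑' mn : ℕ × ℕ, (z ^ mn.1 * conj w ^ mn.2) • A mn.1 mn.2) v⟫ := by
  have hsum : Summable fun mn : ℕ × ℕ => (z ^ mn.1 * conj w ^ mn.2) • A mn.1 mn.2 :=
    .of_norm <| hzw.congr fun mn => by simp [norm_smul]; ring
  simpa [inner_smul_right] using hsum.hasSum.mapL ((innerSL ℂ u).comp (apply ℂ E v))

theorem hasSum_inner_sum_kernel [CompleteSpace E] {ι : Type*} [Fintype ι] {U : Set ℂ}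
    (A : ℕ → ℕ → E →L[ℂ] E)
    (hconv : ∀ z ∈ U, ∀ w ∈ U,
      Summable (fun mn : ℕ × ℕ => ‖A mn.1 mn.2‖ * ‖z‖ ^ mn.1 * ‖w‖ ^ mn.2))
    (κ : ℂ → ℂ → E →L[ℂ] E)
    (hκ : ∀ z ∈ U, ∀ w ∈ U,
      κ z w = ∑' mn : ℕ × ℕ, (z ^ mn.1 * conj w ^ mn.2) • A mn.1 mn.2)
    {z : ι → ℂ} (hz : ∀ i, z i ∈ U) (c : ι → E) :
    HasSum (fun mn : ℕ × ℕ =>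
        ⟪∑ j, conj (z j) ^ mn.1 • c j, A mn.1 mn.2 (∑ i, conj (z i) ^ mn.2 • c i)⟫)
      (∑ i, ∑ j, ⟪c j, κ (z j) (z i) (c i)⟫) := by
  have := hasSum_sum (s := univ) fun i _ => hasSum_sum (s := univ) fun j _ =>
    hκ _ (hz j) _ (hz i) ▸ hasSum_inner_tsum_smul_apply A (hconv _ (hz j) _ (hz i)) (c j) (c i)
  convert this using 2 with mn
  simp only [sum_inner, inner_sum, map_sum, map_smul, inner_smul_left, inner_smul_right, map_pow,
    conj_conj, mul_sum]
  refine sum_congr rfl fun i _ => sum_congr rfl fun j _ => ?_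
  ring

theorem nonneg_of_hasSum_of_forall_sum_range_nonneg {α : Type*} [AddCommMonoid α]
    [TopologicalSpace α] [Preorder α] [ClosedIciTopology α] {f : ℕ × ℕ → α} {s : α}
    (hf : HasSum f s)
    (h : ∀ N, 0 ≤ ∑ m ∈ range (N + 1), ∑ n ∈ range (N + 1), f (m, n)) : 0 ≤ s := by
  have hsq : Tendsto (fun N => range (N + 1) ×ˢ range (N + 1)) atTop atTop :=
    tendsto_finsetProd_atTop.comp <| tendsto_atTop_diagonal.comp <|
      tendsto_finset_range.comp <| tendsto_add_atTop_nat 1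
  exact ge_of_tendsto' (hf.comp hsq) fun N => by simpa [sum_product] using h N

theorem sum_conj_pow_smul_dft {K : ℕ} [NeZero K] (r : ℝ) (φ : ZMod K → E) (m : ℕ) :
    ∑ j : ZMod K, conj ((r : ℂ) * ZMod.stdAddChar (-j)) ^ m • ((K : ℂ)⁻¹ • 𝓕 φ j) =
      (r : ℂ) ^ m • φ m := by
  have h : 𝓕⁻ (𝓕 φ) m = φ m := congrFun (ZMod.dft.symm_apply_apply φ) m
  rw [ZMod.invDFT_apply] at h
  simp only [map_mul, conj_ofReal, AddChar.map_neg_eq_conj, conj_conj, mul_pow, mul_smul]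
  rw [← h, smul_sum, smul_sum]
  simp only [smul_comm _ ((K : ℂ)⁻¹), ← AddChar.map_nsmul_eq_pow, nsmul_eq_mul, mul_comm]

def aliasedSeq (K : ℕ) (r : ℂ) (x : ℕ → E) (m : ℕ) : E := r ^ (K * (m / K)) • x (m % K)

theorem aliasedSeq_eq_pow_smul_inv_pow_smul {K : ℕ} {r : ℂ} (hr : r ≠ 0) (x : ℕ → E) (m : ℕ) :
    aliasedSeq K r x m = r ^ m • (r⁻¹ ^ (m % K) • x (m % K)) := by
  rw [aliasedSeq, smul_smul]
  congr 1
  rw [inv_pow, ← div_eq_mul_inv, eq_div_iff_mul_eq (pow_ne_zero _ hr), ← pow_add, Nat.div_add_mod]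

theorem exists_hasSum_inner_sum_kernel_eq_aliasedSeq [CompleteSpace E] {K : ℕ} [NeZero K]
    {U : Set ℂ} (A : ℕ → ℕ → E →L[ℂ] E)
    (hconv : ∀ z ∈ U, ∀ w ∈ U,
      Summable (fun mn : ℕ × ℕ => ‖A mn.1 mn.2‖ * ‖z‖ ^ mn.1 * ‖w‖ ^ mn.2))
    (κ : ℂ → ℂ → E →L[ℂ] E)
    (hκ : ∀ z ∈ U, ∀ w ∈ U,
      κ z w = ∑' mn : ℕ × ℕ, (z ^ mn.1 * conj w ^ mn.2) • A mn.1 mn.2)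
    {r : ℝ} (hr : 0 < r) (hU : Metric.sphere 0 r ⊆ U) (x : ℕ → E) :
    ∃ z : ZMod K → ℂ, (∀ j, z j ∈ U) ∧ ∃ c : ZMod K → E,
      HasSum (fun mn : ℕ × ℕ =>
          ⟪aliasedSeq K r x mn.1, A mn.1 mn.2 (aliasedSeq K r x mn.2)⟫)
        (∑ i, ∑ j, ⟪c j, κ (z j) (z i) (c i)⟫) := by
  have hz : ∀ j : ZMod K, (r : ℂ) * ZMod.stdAddChar (-j) ∈ U := fun j =>
    hU <| by simp [AddChar.norm_apply, abs_of_pos hr]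
  refine ⟨_, hz, (K : ℂ)⁻¹ • 𝓕 (fun k => ((r : ℂ)⁻¹ ^ k.val • x k.val)), ?_⟩
  have hr' : (r : ℂ) ≠ 0 := ofReal_ne_zero.mpr hr.ne'
  convert hasSum_inner_sum_kernel A hconv κ hκ hz _ using 3 <;>
    simp only [Pi.smul_apply, sum_conj_pow_smul_dft, ZMod.val_natCast,
      aliasedSeq_eq_pow_smul_inv_pow_smul hr']

theorem norm_aliasedSeq_le {K : ℕ} (hK : 0 < K) {r : ℂ} {ρ : ℝ} (hρ : 0 < ρ) (hr : ‖r‖ ≤ ρ)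
    (x : ℕ → E) (m : ℕ) :
    ‖aliasedSeq K r x m‖ ≤ ρ ^ m * ∑ p ∈ range K, ‖x p‖ / ρ ^ p := by
  have hmod : m % K ∈ range K := mem_range.mpr (Nat.mod_lt m hK)
  calc ‖aliasedSeq K r x m‖ ≤ ρ ^ (K * (m / K)) * ‖x (m % K)‖ := by
        rw [aliasedSeq, norm_smul, norm_pow]; gcongr
    _ = ρ ^ m * (‖x (m % K)‖ / ρ ^ (m % K)) := by
        rw [mul_div_assoc', eq_div_iff (by positivity), mul_right_comm, ← pow_add,
          Nat.div_add_mod, mul_comm]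
    _ ≤ ρ ^ m * ∑ p ∈ range K, ‖x p‖ / ρ ^ p := by
        gcongr
        exact single_le_sum (f := fun p => ‖x p‖ / ρ ^ p) (fun p _ => by positivity) hmod

theorem tendsto_aliasedSeq_zero {K : ℕ} (hK : 0 < K) (x : ℕ → E) (m : ℕ) :
    Tendsto (fun r => aliasedSeq K r x m) (𝓝 0) (𝓝 (if m < K then x m else 0)) := by
  have : Continuous fun r => aliasedSeq K r x m := by unfold aliasedSeq; fun_prop
  convert this.tendsto 0 using 2
  rcases lt_or_ge m K with hm | hm
  · simp [aliasedSeq, hm, Nat.div_eq_of_lt, Nat.mod_eq_of_lt]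
  · have : K * (m / K) ≠ 0 := Nat.mul_ne_zero hK.ne' (Nat.div_pos hm hK).ne'
    simp [aliasedSeq, hm.not_gt, zero_pow this]

theorem tendsto_tsum_inner_aliasedSeq {K : ℕ} (hK : 0 < K) {ρ : ℝ} (hρ : 0 < ρ)
    (A : ℕ → ℕ → E →L[ℂ] E)
    (hA : Summable fun mn : ℕ × ℕ => ‖A mn.1 mn.2‖ * ρ ^ mn.1 * ρ ^ mn.2) (x : ℕ → E) :
    Tendsto (fun r => ∑' mn : ℕ × ℕ,
        ⟪aliasedSeq K r x mn.1, A mn.1 mn.2 (aliasedSeq K r x mn.2)⟫) (𝓝 0)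
      (𝓝 (∑ m ∈ range K, ∑ n ∈ range K, ⟪x m, A m n (x n)⟫)) := by
  set M := ∑ p ∈ range K, ‖x p‖ / ρ ^ p
  have hbound : ∀ᶠ r in 𝓝 (0 : ℂ), ∀ mn : ℕ × ℕ,
      ‖⟪aliasedSeq K r x mn.1, A mn.1 mn.2 (aliasedSeq K r x mn.2)⟫‖ ≤
        M ^ 2 * (‖A mn.1 mn.2‖ * ρ ^ mn.1 * ρ ^ mn.2) := by
    filter_upwards [Metric.closedBall_mem_nhds (0 : ℂ) hρ] with r hr mn
    rw [mem_closedBall_zero_iff] at hr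
    calc _ ≤ ‖aliasedSeq K r x mn.1‖ * (‖A mn.1 mn.2‖ * ‖aliasedSeq K r x mn.2‖) :=
          (norm_inner_le_norm _ _).trans (by gcongr; exact (A _ _).le_opNorm _)
      _ ≤ ρ ^ mn.1 * M * (‖A mn.1 mn.2‖ * (ρ ^ mn.2 * M)) := by
          gcongr <;> exact norm_aliasedSeq_le hK hρ hr x _
      _ = _ := by ring
  convert tendsto_tsum_of_dominated_convergence (hA.mul_left _)
    (fun mn => (tendsto_aliasedSeq_zero hK x mn.1).inner
      ((A mn.1 mn.2).continuous.tendsto _ |>.comp (tendsto_aliasedSeq_zero hK x mn.2))) hbound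
  rw [tsum_eq_sum (s := range K ×ˢ range K), sum_product]
  · exact sum_congr rfl fun m hm => sum_congr rfl fun n hn => by
      simp [mem_range.mp hm, mem_range.mp hn]
  · intro mn hmn
    rw [mem_product, mem_range, mem_range, not_and_or] at hmn
    rcases hmn with h | h <;> simp [h]

end

theorem kernel_psd_iff_coeff_matrix_psd_general
    (E : Type*) [NormedAddCommGroup E] [InnerProductSpace ℂ E] [CompleteSpace E]
    (A : ℕ → ℕ → E →L[ℂ] E)
    (hconv : ∀ z ∈ 𝔻, ∀ w ∈ 𝔻,
      Summable (fun mn : ℕ × ℕ => ‖A mn.1 mn.2‖ * ‖z‖ ^ mn.1 * ‖w‖ ^ mn.2))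
    (κ : ℂ → ℂ → E →L[ℂ] E)
    (hκ : ∀ z ∈ 𝔻, ∀ w ∈ 𝔻,
      κ z w = ∑' mn : ℕ × ℕ, (z ^ mn.1 * conj w ^ mn.2) • A mn.1 mn.2) :
    (∀ (N : ℕ) (z : Fin N → ℂ), (∀ i, z i ∈ 𝔻) → ∀ c : Fin N → E,
        0 ≤ ∑ i, ∑ j, ⟪c j, κ (z j) (z i) (c i)⟫) ↔
      (∀ (N : ℕ) (x : ℕ → E),
        0 ≤ ∑ m ∈ Finset.range (N + 1), ∑ n ∈ Finset.range (N + 1),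
          ⟪x m, A m n (x n)⟫) := by
  refine ⟨fun hker N x => ?_, fun hA N z hz c =>
    nonneg_of_hasSum_of_forall_sum_range_nonneg (hasSum_inner_sum_kernel A hconv κ hκ hz c)
      fun N => hA N fun m => ∑ j, conj (z j) ^ m • c j⟩
  have hhalf : ((1 / 2 : ℝ) : ℂ) ∈ 𝔻 := by
    rw [mem_ball_zero_iff, norm_real, Real.norm_of_nonneg (by norm_num)]; norm_num
  have hlim := (tendsto_tsum_inner_aliasedSeq N.succ_pos (by norm_num : (0 : ℝ) < 1 / 2) A
    (by simpa using hconv _ hhalf _ hhalf) x).comp (continuous_ofReal.tendsto' 0 0 ofReal_zero)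
  refine ge_of_tendsto (hlim.mono_left (nhdsWithin_le_nhds (s := Set.Ioi 0))) ?_
  filter_upwards [Ioo_mem_nhdsGT (zero_lt_one' ℝ)] with r ⟨hr0, hr1⟩
  obtain ⟨z, hz, c, hsum⟩ := exists_hasSum_inner_sum_kernel_eq_aliasedSeq (K := N + 1)
    A hconv κ hκ hr0 (Metric.sphere_subset_ball hr1) x
  rw [Function.comp_apply, hsum.tsum_eq]
  exact hker (N + 1) z hz c

theorem kernel_psd_iff_coeff_matrix_psd
    (E : Type*) [NormedAddCommGroup E] [InnerProductSpace ℂ E] [CompleteSpace E]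
    [TopologicalSpace.SeparableSpace E]
    (A : ℕ → ℕ → E →L[ℂ] E)
    (hconv : ∀ z ∈ 𝔻, ∀ w ∈ 𝔻,
      Summable (fun mn : ℕ × ℕ => ‖A mn.1 mn.2‖ * ‖z‖ ^ mn.1 * ‖w‖ ^ mn.2))
    (κ : ℂ → ℂ → E →L[ℂ] E)
    (hκ : ∀ z ∈ 𝔻, ∀ w ∈ 𝔻,
      κ z w = ∑' mn : ℕ × ℕ, (z ^ mn.1 * conj w ^ mn.2) • A mn.1 mn.2) :
    (∀ (N : ℕ) (z : Fin N → ℂ), (∀ i, z i ∈ 𝔻) → ∀ c : Fin N → E,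
        0 ≤ ∑ i, ∑ j, ⟪c j, κ (z j) (z i) (c i)⟫) ↔
      (∀ (N : ℕ) (x : ℕ → E),
        0 ≤ ∑ m ∈ Finset.range (N + 1), ∑ n ∈ Finset.range (N + 1),
          ⟪x m, A m n (x n)⟫) :=
  kernel_psd_iff_coeff_matrix_psd_general E A hconv κ hκ
end
end

section
/- Let φ : 𝔻 → ℂ be holomorphic with Taylor expansion φ(z) = Σ_{j≥0} c_j z^j. For integers m,n ≥ 0 define g_{m,n} = δ_{m,n} + Σ_{k=0}^n conj(c_{m−n+k})·c_k when m ≥ n, and g_{m,n} = Σ_{j=0}^m conj(c_j)·c_{n−m+j} when m < n. Then for all z,w ∈ 𝔻 the double series Σ_{m,n≥0} g_{m,n}·z^n·conj(w)^m converges absolutely, and its sum equals (1 + φ(z)·conj(φ(w)))/(1 − z·conj(w)). -/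
/-!
Write `q = z * conj w`. Splitting `m = j + t`, `n = k + t` with `t ≤ min m n`, the coefficient
`g m n` is `δ m n` plus the sum of `conj (c j) * c k` over these splittings, and
`z ^ n * conj w ^ m = z ^ k * conj w ^ j * q ^ t`. So the double series is the diagonal geometric
series `∑ q ^ m` plus a reindexing of the triple product
`(∑ conj (c j) * conj w ^ j) * (∑ c k * z ^ k) * (∑ q ^ t) = conj (φ w) * φ z / (1 - q)`.
All three factors converge absolutely on the disc, which justifies the rearrangement.
-/

open scoped ComplexConjugate
open Complex

noncomputable section

local notation "𝔻" => Metric.ball (0:ℂ) 1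

open Filter Asymptotics Finset

theorem summable_norm_mul_pow_of_norm_lt {𝕜 : Type*} [NormedField 𝕜] {c : ℕ → 𝕜} {s z : 𝕜}
    (hs : Summable fun j => c j * s ^ j) (hz : ‖z‖ < ‖s‖) :
    Summable fun j => ‖c j * z ^ j‖ := by
  have hs0 : s ≠ 0 := norm_pos_iff.mp ((norm_nonneg z).trans_lt hz)
  have hratio : ‖z / s‖ < 1 := by rwa [norm_div, div_lt_one (norm_pos_iff.mpr hs0)]
  have hbounded : (fun j => c j * s ^ j) =O[atTop] fun _ => (1 : ℝ) :=
    hs.tendsto_atTop_zero.isBigO_one ℝ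
  refine summable_of_isBigO_nat (summable_geometric_of_lt_one (norm_nonneg _) hratio) ?_
  have hsplit : (fun j => c j * z ^ j) = fun j => c j * s ^ j * (z / s) ^ j := by
    ext j; rw [div_pow, mul_assoc, mul_div_cancel₀ _ (pow_ne_zero j hs0)]
  rw [isBigO_norm_left, hsplit]
  simpa using hbounded.mul (isBigO_norm_right.mpr (isBigO_refl (fun j => (z / s) ^ j) atTop))

theorem summable_norm_mul_pow_of_mem_ball {𝕜 : Type*} [RCLike 𝕜] {c : ℕ → 𝕜} {ρ : ℝ}
    (h : ∀ s ∈ Metric.ball (0 : 𝕜) ρ, Summable fun j => c j * s ^ j) {z : 𝕜}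
    (hz : z ∈ Metric.ball 0 ρ) : Summable fun j => ‖c j * z ^ j‖ := by
  obtain ⟨s, hzs, hsρ⟩ := exists_between (mem_ball_zero_iff.mp hz)
  have hs : ‖(s : 𝕜)‖ = s := by simp [abs_of_pos ((norm_nonneg z).trans_lt hzs)]
  exact summable_norm_mul_pow_of_norm_lt (h s (by simpa [hs])) (by rwa [hs])

theorem HasSum.diagonal {α β : Type*} [AddCommMonoid α] [TopologicalSpace α]
    [DecidableEq β] {f : β → α} {a : α} (hf : HasSum f a) :
    HasSum (fun x : β × β => if x.1 = x.2 then f x.1 else 0) a := by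
  have hdiag : Function.Injective fun b : β => (b, b) := fun _ _ h => congrArg Prod.fst h
  refine (hdiag.hasSum_iff fun x hx => if_neg fun h => hx ⟨x.1, Prod.ext rfl h⟩).mp ?_
  simpa [Function.comp_def] using hf

theorem sum_range_sub_sub_eq {M : Type*} [AddCommMonoid M] (f : ℕ → ℕ → M) {m n : ℕ}
    (h : n ≤ m) :
    ∑ t ∈ range (n + 1), f (m - t) (n - t) = ∑ k ∈ range (n + 1), f (m - n + k) k := by
  rw [← sum_range_reflect]
  refine sum_congr rfl fun k hk => ?_
  have hk : k < n + 1 := mem_range.mp hk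
  congr 1 <;> omega

theorem sum_range_min_sub_sub_eq {M : Type*} [AddCommMonoid M] (f : ℕ → ℕ → M) (m n : ℕ) :
    ∑ t ∈ range (min m n + 1), f (m - t) (n - t) =
      if n ≤ m then ∑ k ∈ range (n + 1), f (m - n + k) k
      else ∑ j ∈ range (m + 1), f j (n - m + j) := by
  split_ifs with h
  · rw [min_eq_right h, sum_range_sub_sub_eq f h]
  · rw [min_eq_left (by omega), sum_range_sub_sub_eq (fun a b => f b a) (by omega : m ≤ n)]

theorem ite_add_sum_range_min_sub_sub_eq {M : Type*} [AddCommMonoidWithOne M]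
    (f : ℕ → ℕ → M) (m n : ℕ) :
    (if m = n then 1 else 0) + ∑ t ∈ range (min m n + 1), f (m - t) (n - t) =
      if n ≤ m then (if m = n then 1 else 0) + ∑ k ∈ range (n + 1), f (m - n + k) k
      else ∑ j ∈ range (m + 1), f j (n - m + j) := by
  rw [sum_range_min_sub_sub_eq]
  split_ifs <;> first | rfl | omega | simp

theorem ite_add_sum_range_min_mul_pow_mul_pow {R : Type*} [CommSemiring R] (a b : ℕ → R)
    (x y : R) (m n : ℕ) :
    ((if m = n then 1 else 0) + ∑ t ∈ range (min m n + 1), a (m - t) * b (n - t)) * x ^ n * y ^ m =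
      (if m = n then (x * y) ^ m else 0) +
        ∑ t ∈ range (min m n + 1),
          a (m - t) * y ^ (m - t) * (b (n - t) * x ^ (n - t)) * (x * y) ^ t := by
  rw [add_mul, add_mul, sum_mul, sum_mul]
  congr 1
  · split_ifs with h
    · rw [h, one_mul, mul_pow]
    · simp
  refine sum_congr rfl fun t ht => ?_
  have ht : t ≤ min m n := Nat.lt_succ_iff.mp (mem_range.mp ht)
  obtain ⟨a, rfl⟩ : ∃ a, m = a + t := ⟨m - t, by omega⟩
  obtain ⟨b, rfl⟩ : ∃ b, n = b + t := ⟨n - t, by omega⟩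
  simp only [Nat.add_sub_cancel, mul_pow, pow_add]
  ring

section ShiftedProduct

variable {R : Type*} [NormedRing R] {u v r : ℕ → R}

def shiftedTriple (u v r : ℕ → R) (x : (ℕ × ℕ) × ℕ) : R :=
  if x.2 ≤ min x.1.1 x.1.2 then u (x.1.1 - x.2) * v (x.1.2 - x.2) * r x.2 else 0

def shiftIndex (x : (ℕ × ℕ) × ℕ) : (ℕ × ℕ) × ℕ := ((x.1.1 + x.2, x.1.2 + x.2), x.2)

theorem shiftIndex_injective : Function.Injective shiftIndex := by
  rintro ⟨⟨j, k⟩, t⟩ ⟨⟨j', k'⟩, t'⟩ h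
  simp only [shiftIndex, Prod.mk.injEq] at h ⊢
  omega

theorem shiftedTriple_shiftIndex (u v r : ℕ → R) (x : (ℕ × ℕ) × ℕ) :
    shiftedTriple u v r (shiftIndex x) = u x.1.1 * v x.1.2 * r x.2 := by
  simp [shiftedTriple, shiftIndex]

theorem shiftedTriple_eq_zero_of_notMem_range (u v r : ℕ → R) :
    ∀ x ∉ Set.range shiftIndex, shiftedTriple u v r x = 0 := by
  rintro ⟨⟨m, n⟩, t⟩ hx
  refine if_neg fun ht => hx ⟨((m - t, n - t), t), ?_⟩
  simp only [shiftIndex, Prod.mk.injEq, and_true] at ht ⊢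
  omega

theorem hasSum_shiftedTriple_fiber (u v r : ℕ → R) (m n : ℕ) :
    HasSum (fun t => shiftedTriple u v r ((m, n), t))
      (∑ t ∈ range (min m n + 1), u (m - t) * v (n - t) * r t) := by
  convert hasSum_sum_of_ne_finset_zero (L := SummationFilter.unconditional ℕ)
    (s := range (min m n + 1)) fun t ht => ?_ using 1
  · exact sum_congr rfl fun t ht => (if_pos (Nat.lt_succ_iff.mp (mem_range.mp ht))).symm
  · exact if_neg fun h => ht (mem_range.mpr (Nat.lt_succ_of_le h))

theorem summable_norm_shiftedTriple (hu : Summable fun j => ‖u j‖)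
    (hv : Summable fun k => ‖v k‖) (hr : Summable fun t => ‖r t‖) :
    Summable fun x => ‖shiftedTriple u v r x‖ := by
  rw [← shiftIndex_injective.summable_iff fun x hx => by
    rw [shiftedTriple_eq_zero_of_notMem_range u v r x hx, norm_zero]]
  exact (hu.mul_norm hv).mul_norm hr |>.congr fun x => by simp [shiftedTriple_shiftIndex]

theorem summable_norm_sum_range_min_mul (hu : Summable fun j => ‖u j‖)
    (hv : Summable fun k => ‖v k‖) (hr : Summable fun t => ‖r t‖) :
    Summable fun mn : ℕ × ℕ =>
      ‖∑ t ∈ range (min mn.1 mn.2 + 1), u (mn.1 - t) * v (mn.2 - t) * r t‖ := by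
  have hnorm := summable_norm_shiftedTriple hu hv hr
  refine hnorm.prod.of_nonneg_of_le (fun _ => norm_nonneg _) fun mn => ?_
  rw [← (hasSum_shiftedTriple_fiber u v r mn.1 mn.2).tsum_eq]
  exact norm_tsum_le_tsum_norm (hnorm.prod_factor mn)

theorem hasSum_sum_range_min_mul [CompleteSpace R] {U V W : R} (hu : HasSum u U)
    (hv : HasSum v V) (hr : HasSum r W) (hu' : Summable fun j => ‖u j‖)
    (hv' : Summable fun k => ‖v k‖) (hr' : Summable fun t => ‖r t‖) :
    HasSum (fun mn : ℕ × ℕ =>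
      ∑ t ∈ range (min mn.1 mn.2 + 1), u (mn.1 - t) * v (mn.2 - t) * r t) (U * V * W) := by
  have hprod : HasSum (fun x : (ℕ × ℕ) × ℕ => u x.1.1 * v x.1.2 * r x.2) (U * V * W) :=
    (hu.mul hv (hu'.mul_norm hv').of_norm).mul hr ((hu'.mul_norm hv').mul_norm hr').of_norm
  have htriple : HasSum (shiftedTriple u v r) (U * V * W) := by
    rw [← shiftIndex_injective.hasSum_iff (shiftedTriple_eq_zero_of_notMem_range u v r)]
    simpa [Function.comp_def, shiftedTriple_shiftIndex] using hprod
  exact htriple.prod_fiberwise fun mn => hasSum_shiftedTriple_fiber u v r mn.1 mn.2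

end ShiftedProduct

theorem cauchy_dual_kernel_series
    (φ : ℂ → ℂ) (c : ℕ → ℂ)
    (hφ : ∀ z ∈ 𝔻, HasSum (fun j : ℕ => c j * z ^ j) (φ z))
    (g : ℕ → ℕ → ℂ)
    (hg : ∀ m n : ℕ, g m n =
      if n ≤ m then
        (if m = n then 1 else 0) +
          ∑ k ∈ Finset.range (n + 1), conj (c (m - n + k)) * c k
      else
        ∑ j ∈ Finset.range (m + 1), conj (c j) * c (n - m + j)) :
    ∀ z ∈ 𝔻, ∀ w ∈ 𝔻,
      Summable (fun mn : ℕ × ℕ => ‖g mn.1 mn.2 * z ^ mn.2 * conj w ^ mn.1‖) ∧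
      ∑' mn : ℕ × ℕ, g mn.1 mn.2 * z ^ mn.2 * conj w ^ mn.1 =
        (1 + φ z * conj (φ w)) / (1 - z * conj w) := by
  have habs : ∀ z ∈ 𝔻, Summable fun j => ‖c j * z ^ j‖ :=
    fun z => summable_norm_mul_pow_of_mem_ball fun s hs => (hφ s hs).summable
  intro z hz w hw
  have hq : ‖z * conj w‖ < 1 := by
    simpa using mul_lt_one_of_nonneg_of_lt_one_left (norm_nonneg z)
      (mem_ball_zero_iff.mp hz) (mem_ball_zero_iff.mp hw).le
  have hconj : HasSum (fun j => conj (c j) * conj w ^ j) (conj (φ w)) := by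
    simpa using (hφ w hw).star
  have hnorm_conj : Summable fun j => ‖conj (c j) * conj w ^ j‖ := by simpa using habs w hw
  have hterm : ∀ mn : ℕ × ℕ, g mn.1 mn.2 * z ^ mn.2 * conj w ^ mn.1 =
      (if mn.1 = mn.2 then (z * conj w) ^ mn.1 else 0) + ∑ t ∈ range (min mn.1 mn.2 + 1),
        conj (c (mn.1 - t)) * conj w ^ (mn.1 - t) * (c (mn.2 - t) * z ^ (mn.2 - t)) *
          (z * conj w) ^ t := fun mn => by
    rw [hg, ← ite_add_sum_range_min_sub_sub_eq fun a b => conj (c a) * c b]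
    exact ite_add_sum_range_min_mul_pow_mul_pow (fun j => conj (c j)) c z (conj w) mn.1 mn.2
  have hdiag_norm : Summable fun mn : ℕ × ℕ =>
      ‖if mn.1 = mn.2 then (z * conj w) ^ mn.1 else 0‖ :=
    (summable_norm_geometric_of_norm_lt_one hq).hasSum.diagonal.summable.congr fun mn => by
      split_ifs <;> simp
  have hnorm_triple := summable_norm_sum_range_min_mul hnorm_conj (habs z hz)
    (summable_norm_geometric_of_norm_lt_one hq)
  have htriple := hasSum_sum_range_min_mul hconj (hφ z hz) (hasSum_geometric_of_norm_lt_one hq)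
    hnorm_conj (habs z hz) (summable_norm_geometric_of_norm_lt_one hq)
  refine ⟨?_, ?_⟩
  · refine (hdiag_norm.add hnorm_triple).of_nonneg_of_le (fun _ => norm_nonneg _) fun mn => ?_
    rw [hterm mn]
    exact norm_add_le _ _
  · rw [tsum_congr hterm, ((hasSum_geometric_of_norm_lt_one hq).diagonal.add htriple).tsum_eq]
    have hq1 : 1 - z * conj w ≠ 0 := sub_ne_zero.mpr fun h => by simp [← h] at hq
    field_simp
end
end

section
/- Let k ≥ 1 be an integer, let c_1,…,c_k be positive real numbers, and let ζ_1,…,ζ_k be distinct complex numbers with |ζ_j| = 1. Then there exist a real number γ > 0 and complex numbers α_1,…,α_k with |α_j| > 1 such that for every z ∈ ℂ with |z| = 1 one has ∏_{j=1}^k |z−ζ_j|² + Σ_{j=1}^k c_j·∏_{1≤l≤k, l≠j} |z−ζ_l|² = γ·∏_{j=1}^k |z−α_j|². Moreover, γ and the numbers α_1,…,α_k are unique up to a permutation of the α_j's: if γ' > 0 and α_1',…,α_k' with |α_j'| > 1 also satisfy this identity, then γ' = γ and (α_1',…,α_k') is a permutation of (α_1,…,α_k). -/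
/-!
On the unit circle `conj z = z⁻¹`, so for `a ≠ 0` one has
`‖z - a‖² = -conj a · z⁻¹ · (z - a) (z - a*)`, where `a* = (conj a)⁻¹` is the inversion of `a`
in the circle. Hence the left-hand side equals `w · z⁻ᵏ · Q(z)` for a monic polynomial `Q` of
degree `2k`. As this is real on the circle, `a ↦ a*` permutes the roots of `Q`; as it is positive
there, no root lies on the circle. So the roots come in pairs `a, a*` with `‖a‖ > 1`, and these
`k` outer roots are the `α_j`. Conversely `γ ∏ ‖z - α_j‖²` determines the polynomial
`∏ (X - α_j) (X - α_j*)` and the constant, and the roots of that polynomial outside the disc are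
exactly the `α_j`.
-/

open Complex ComplexConjugate Polynomial Finset

theorem Fintype.exists_perm_of_map_univ_val_eq {ι α : Type*} [Fintype ι]
    {f g : ι → α} (h : Finset.univ.val.map f = Finset.univ.val.map g) :
    ∃ σ : Equiv.Perm ι, ∀ i, f i = g (σ i) := by
  classical
  have hfiber : ∀ c, Fintype.card {i // f i = c} = Fintype.card {i // g i = c} := fun c => by
    have := congrArg (Multiset.count c) h
    simp only [Multiset.count_map] at this
    simp only [Fintype.card_subtype, Finset.card_def, Finset.filter_val]
    convert this using 3 <;> exact eq_comm
  exact ⟨Equiv.ofFiberEquiv fun c => Fintype.equivOfCardEq (hfiber c),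
    fun i => (Equiv.ofFiberEquiv_map _ i).symm⟩

theorem Multiset.exists_fin_map_univ_val_eq {α : Type*} {k : ℕ} (s : Multiset α)
    (hs : Multiset.card s = k) : ∃ f : Fin k → α, Finset.univ.val.map f = s := by
  obtain ⟨l, rfl⟩ : ∃ l : List α, (l : Multiset α) = s := Quotient.exists_rep s
  rw [Multiset.coe_card] at hs
  subst hs
  exact ⟨l.get, by rw [Fin.univ_val_map, List.ofFn_get]⟩

theorem infinite_setOf_norm_eq_one : {z : ℂ | ‖z‖ = 1}.Infinite := by
  simpa [Metric.sphere] using (isPreconnected_sphere (by simp) (0 : ℂ) 1).infinite_of_nontrivial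
    ⟨1, by simp, -1, by simp, by norm_num⟩

noncomputable def circleInv (a : ℂ) : ℂ := (conj a)⁻¹

theorem norm_circleInv (a : ℂ) : ‖circleInv a‖ = ‖a‖⁻¹ := by
  simp [circleInv]

theorem circleInv_of_norm_eq_one {a : ℂ} (ha : ‖a‖ = 1) : circleInv a = a := by
  rw [circleInv, ← Complex.inv_eq_conj ha, inv_inv]

theorem conj_sub_of_norm_eq_one {z a : ℂ} (hz : ‖z‖ = 1) (ha : a ≠ 0) :
    conj (z - a) = -conj a * z⁻¹ * (z - circleInv a) := by
  have hz0 : z ≠ 0 := by rintro rfl; simp at hz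
  have ha' : conj a ≠ 0 := by simpa using ha
  rw [map_sub, ← Complex.inv_eq_conj hz, circleInv]
  field_simp
  ring

theorem ofReal_norm_sub_sq_of_norm_eq_one {z a : ℂ} (hz : ‖z‖ = 1) (ha : a ≠ 0) :
    ((‖z - a‖ ^ 2 : ℝ) : ℂ) = -conj a * z⁻¹ * ((z - a) * (z - circleInv a)) := by
  push_cast
  rw [← Complex.mul_conj', conj_sub_of_norm_eq_one hz ha]
  ring

theorem eq_of_eval_eq_on_circle {P P' : ℂ[X]} (hP : P.Monic) (hP' : P'.Monic) {c c' : ℂ}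
    (hc : c ≠ 0) {n : ℕ}
    (h : ∀ z : ℂ, ‖z‖ = 1 → c * z⁻¹ ^ n * P.eval z = c' * z⁻¹ ^ n * P'.eval z) :
    c = c' ∧ P = P' := by
  have hpoly : C c * P = C c' * P' := by
    refine eq_of_infinite_eval_eq _ _ (infinite_setOf_norm_eq_one.mono fun z hz => ?_)
    have hz0 : z ≠ 0 := by rintro rfl; simp at hz
    have := h z hz
    simp only [Set.mem_ofPred_eq, eval_mul, eval_C]
    rw [mul_right_comm c, mul_right_comm c'] at this
    exact mul_right_cancel₀ (pow_ne_zero n (inv_ne_zero hz0)) this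
  have hcc' : c = c' := by
    simpa [hP.leadingCoeff, hP'.leadingCoeff] using congrArg leadingCoeff hpoly
  subst hcc'
  exact ⟨rfl, mul_left_cancel₀ (C_ne_zero.2 hc) hpoly⟩

noncomputable def selfInversivePoly (s : Multiset ℂ) : ℂ[X] :=
  ((s + s.map circleInv).map (X - C ·)).prod

theorem selfInversivePoly_monic (s : Multiset ℂ) : (selfInversivePoly s).Monic :=
  monic_multiset_prod_of_monic _ _ fun a _ => monic_X_sub_C a

theorem roots_selfInversivePoly (s : Multiset ℂ) :
    (selfInversivePoly s).roots = s + s.map circleInv :=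
  roots_multiset_prod_X_sub_C _

theorem eval_selfInversivePoly (s : Multiset ℂ) (z : ℂ) :
    (selfInversivePoly s).eval z = (s.map fun a => (z - a) * (z - circleInv a)).prod := by
  simp [selfInversivePoly, eval_multiset_prod, Multiset.prod_map_mul]

theorem ofReal_prod_norm_sub_sq {s : Multiset ℂ} (hs : ∀ a ∈ s, a ≠ 0) {z : ℂ} (hz : ‖z‖ = 1) :
    (((s.map fun a => ‖z - a‖ ^ 2).prod : ℝ) : ℂ) =
      (s.map fun a => -conj a).prod * z⁻¹ ^ Multiset.card s * (selfInversivePoly s).eval z := by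
  rw [← ofRealHom_eq_coe, map_multiset_prod, Multiset.map_map]
  simp only [Function.comp_def, ofRealHom_eq_coe]
  rw [Multiset.map_congr rfl fun a ha => ofReal_norm_sub_sq_of_norm_eq_one hz (hs a ha),
    Multiset.prod_map_mul, Multiset.prod_map_mul, Multiset.map_const', Multiset.prod_replicate,
    eval_selfInversivePoly]

theorem filter_one_lt_norm_add_map_circleInv {s : Multiset ℂ} (hs : ∀ a ∈ s, 1 < ‖a‖) :
    (s + s.map circleInv).filter (1 < ‖·‖) = s := by
  rw [Multiset.filter_add, Multiset.filter_eq_self.2 hs, Multiset.filter_eq_nil.2, add_zero]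
  simp only [Multiset.mem_map]
  rintro _ ⟨a, ha, rfl⟩
  rw [norm_circleInv]
  exact not_lt.2 (inv_le_one_of_one_le₀ (hs a ha).le)

theorem eq_of_mul_prod_norm_sub_sq_eq {γ γ' : ℝ} {s t : Multiset ℂ} (hγ : γ ≠ 0)
    (hs : ∀ a ∈ s, 1 < ‖a‖) (ht : ∀ a ∈ t, 1 < ‖a‖) (hcard : Multiset.card s = Multiset.card t)
    (h : ∀ z : ℂ, ‖z‖ = 1 →
      γ * (s.map fun a => ‖z - a‖ ^ 2).prod = γ' * (t.map fun a => ‖z - a‖ ^ 2).prod) :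
    γ = γ' ∧ s = t := by
  have hs0 : ∀ a ∈ s, a ≠ 0 := fun a ha => norm_pos_iff.1 (one_pos.trans (hs a ha))
  have ht0 : ∀ a ∈ t, a ≠ 0 := fun a ha => norm_pos_iff.1 (one_pos.trans (ht a ha))
  have hA : (s.map fun a => -conj a).prod ≠ 0 :=
    Multiset.prod_ne_zero fun h0 => by simp at h0; exact hs0 0 h0 rfl
  obtain ⟨hc, hP⟩ := eq_of_eval_eq_on_circle (selfInversivePoly_monic s)
    (selfInversivePoly_monic t) (c' := γ' * (t.map fun a => -conj a).prod)
    (mul_ne_zero (ofReal_ne_zero.2 hγ) hA) fun z hz => by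
      have := congrArg ofReal (h z hz)
      rw [ofReal_mul, ofReal_mul, ofReal_prod_norm_sub_sq hs0 hz, ofReal_prod_norm_sub_sq ht0 hz,
        ← hcard] at this
      linear_combination this
  have hst : s = t := by
    rw [← filter_one_lt_norm_add_map_circleInv hs, ← filter_one_lt_norm_add_map_circleInv ht,
      ← roots_selfInversivePoly, ← roots_selfInversivePoly, hP]
  subst hst
  exact ⟨ofReal_injective (mul_right_cancel₀ hA hc), rfl⟩

theorem map_circleInv_roots_eq {Q : ℂ[X]} (hQ : Q.Monic) (hM0 : ∀ a ∈ Q.roots, a ≠ 0) {k : ℕ}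
    (hdeg : Q.natDegree = 2 * k) {w : ℂ} (hw : w ≠ 0)
    (hreal : ∀ z : ℂ, ‖z‖ = 1 → conj (w * z⁻¹ ^ k * Q.eval z) = w * z⁻¹ ^ k * Q.eval z) :
    Q.roots.map circleInv = Q.roots := by
  set M := Q.roots
  have hQM : Q = (M.map (X - C ·)).prod := (IsAlgClosed.splits Q).eq_prod_roots_of_monic hQ
  set R : ℂ[X] := ((M.map circleInv).map (X - C ·)).prod
  set B := (M.map fun a => -conj a).prod
  have hB : B ≠ 0 := Multiset.prod_ne_zero fun h0 => by simp at h0; exact hM0 0 h0 rfl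
  have hconj : ∀ z : ℂ, ‖z‖ = 1 → conj (Q.eval z) = B * z⁻¹ ^ (2 * k) * R.eval z := by
    intro z hz
    conv_lhs => rw [hQM]
    rw [eval_multiset_prod, map_multiset_prod, Multiset.map_map, Multiset.map_map]
    simp only [Function.comp_def, eval_sub, eval_X, eval_C]
    rw [Multiset.map_congr rfl fun a ha => conj_sub_of_norm_eq_one hz (hM0 a ha),
      Multiset.prod_map_mul, Multiset.prod_map_mul, Multiset.map_const', Multiset.prod_replicate,
      IsAlgClosed.card_roots_eq_natDegree, hdeg]
    simp only [R, B, eval_multiset_prod, Multiset.map_map, Function.comp_def, eval_sub, eval_X,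
      eval_C]
  obtain ⟨-, hRQ⟩ := eq_of_eval_eq_on_circle (P := R)
    (monic_multiset_prod_of_monic _ _ fun a _ => monic_X_sub_C a) hQ (c := conj w * B) (c' := w)
    (mul_ne_zero ((_root_.map_ne_zero _).2 hw) hB) fun z hz => by
      have hz0 : z ≠ 0 := by rintro rfl; simp at hz
      have hzk : z ^ k * z⁻¹ ^ k = 1 := by rw [← mul_pow, mul_inv_cancel₀ hz0, one_pow]
      have := hreal z hz
      rw [map_mul, map_mul, hconj z hz, map_pow, map_inv₀, ← Complex.inv_eq_conj hz,
        inv_inv] at this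
      linear_combination this - conj w * B * z⁻¹ ^ k * R.eval z * hzk
  rw [← roots_multiset_prod_X_sub_C (M.map circleInv)]
  exact congrArg roots hRQ

theorem filter_add_map_circleInv_filter {M : Multiset ℂ} (hM : M.map circleInv = M)
    (h0 : ∀ a ∈ M, a ≠ 0) (h1 : ∀ a ∈ M, ‖a‖ ≠ 1) :
    M.filter (1 < ‖·‖) + (M.filter (1 < ‖·‖)).map circleInv = M := by
  conv_rhs => rw [← Multiset.filter_add_not (1 < ‖·‖) M]
  congr 1
  conv_rhs => rw [← hM]
  rw [Multiset.filter_map]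
  congr 1
  refine Multiset.filter_congr fun a ha => ?_
  have hpos : 0 < ‖a‖ := norm_pos_iff.2 (h0 a ha)
  simp only [Function.comp_apply, norm_circleInv, not_lt, inv_le_one₀ hpos]
  exact ⟨fun h => h.le, fun h => lt_of_le_of_ne h (h1 a ha).symm⟩

theorem exists_mul_prod_norm_sub_sq_eq {Q : ℂ[X]} (hQ : Q.Monic) (hQ0 : Q.eval 0 ≠ 0) {k : ℕ}
    (hdeg : Q.natDegree = 2 * k) {w : ℂ} {F : ℂ → ℝ} (hpos : ∀ z : ℂ, ‖z‖ = 1 → 0 < F z)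
    (hF : ∀ z : ℂ, ‖z‖ = 1 → (F z : ℂ) = w * z⁻¹ ^ k * Q.eval z) :
    ∃ (γ : ℝ) (s : Multiset ℂ), 0 < γ ∧ Multiset.card s = k ∧ (∀ a ∈ s, 1 < ‖a‖) ∧
      ∀ z : ℂ, ‖z‖ = 1 → F z = γ * (s.map fun a => ‖z - a‖ ^ 2).prod := by
  have h1 : ‖(1 : ℂ)‖ = 1 := norm_one
  have hw : w ≠ 0 := by
    rintro rfl
    have := hF 1 h1
    rw [zero_mul, zero_mul, ofReal_eq_zero] at this
    exact (hpos 1 h1).ne' this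
  have hM0 : ∀ a ∈ Q.roots, a ≠ 0 := fun a ha h0 =>
    hQ0 (h0 ▸ ((mem_roots hQ.ne_zero).1 ha).eq_zero)
  have hM1 : ∀ a ∈ Q.roots, ‖a‖ ≠ 1 := fun a ha ha1 => (hpos a ha1).ne' <| by
    have := hF a ha1
    rwa [((mem_roots hQ.ne_zero).1 ha).eq_zero, mul_zero, ofReal_eq_zero] at this
  have hsplit := filter_add_map_circleInv_filter
    (map_circleInv_roots_eq hQ hM0 hdeg hw fun z hz => by rw [← hF z hz, conj_ofReal]) hM0 hM1
  set s := Q.roots.filter (1 < ‖·‖)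
  have hs : ∀ a ∈ s, 1 < ‖a‖ := fun a ha => (Multiset.mem_filter.1 ha).2
  have hcard : Multiset.card s = k := by
    have := congrArg Multiset.card hsplit
    rw [Multiset.card_add, Multiset.card_map, IsAlgClosed.card_roots_eq_natDegree, hdeg] at this
    omega
  have hQs : selfInversivePoly s = Q := by
    rw [selfInversivePoly, hsplit]
    exact ((IsAlgClosed.splits Q).eq_prod_roots_of_monic hQ).symm
  set G : ℂ → ℝ := fun z => (s.map fun a => ‖z - a‖ ^ 2).prod
  have hG : ∀ z : ℂ, ‖z‖ = 1 →
      (G z : ℂ) = (s.map fun a => -conj a).prod * z⁻¹ ^ k * Q.eval z := fun z hz => by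
    rw [← hcard, ← hQs]
    exact ofReal_prod_norm_sub_sq (fun a ha => norm_pos_iff.1 (one_pos.trans (hs a ha))) hz
  have hG1 : 0 < G 1 := Multiset.prod_pos fun x hx => by
    obtain ⟨a, ha, rfl⟩ := Multiset.mem_map.1 hx
    exact pow_pos (norm_pos_iff.2 (sub_ne_zero.2 fun h => by simpa [← h] using hs a ha)) 2
  refine ⟨F 1 / G 1, s, div_pos (hpos 1 h1) hG1, hcard, hs, fun z hz => ?_⟩
  rw [div_mul_eq_mul_div, eq_div_iff hG1.ne']
  apply ofReal_injective
  push_cast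
  rw [hF z hz, hF 1 h1, hG z hz, hG 1 h1]
  ring

section FejerRiesz

variable {ι : Type*} [Fintype ι] [DecidableEq ι]

noncomputable def fejerRieszPoly (c : ι → ℝ) (ζ : ι → ℂ) : ℂ[X] :=
  (∏ j, (X - C (ζ j))) ^ 2 - ∑ j, C (c j * ζ j) * X * (∏ l ∈ univ.erase j, (X - C (ζ l))) ^ 2

theorem degree_sum_mul_prod_erase_sq_lt (a : ι → ℂ) (ζ : ι → ℂ) :
    (∑ j, C (a j) * X * (∏ l ∈ univ.erase j, (X - C (ζ l))) ^ 2).degree <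
      ((2 * Fintype.card ι : ℕ) : WithBot ℕ) := by
  refine (degree_sum_le _ _).trans_lt ((Finset.sup_lt_iff (WithBot.bot_lt_coe _)).2 fun j _ => ?_)
  have hn : (∏ l ∈ univ.erase j, (X - C (ζ l))).natDegree = Fintype.card ι - 1 := by
    simp [natDegree_prod_of_monic _ _ fun l _ => monic_X_sub_C (ζ l), card_erase_of_mem]
  have hle : (C (a j) * X * (∏ l ∈ univ.erase j, (X - C (ζ l))) ^ 2).natDegree ≤
      1 + 2 * (Fintype.card ι - 1) :=
    natDegree_mul_le.trans (add_le_add (by compute_degree) (natDegree_pow_le.trans_eq (by rw [hn])))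
  have hpos : 0 < Fintype.card ι := Fintype.card_pos_iff.2 ⟨j⟩
  calc _ ≤ ((1 + 2 * (Fintype.card ι - 1) : ℕ) : WithBot ℕ) := degree_le_of_natDegree_le hle
    _ < ((2 * Fintype.card ι : ℕ) : WithBot ℕ) := by
      exact_mod_cast (by omega : 1 + 2 * (Fintype.card ι - 1) < 2 * Fintype.card ι)

theorem fejerRieszPoly_monic_and_natDegree (c : ι → ℝ) (ζ : ι → ℂ) :
    (fejerRieszPoly c ζ).Monic ∧ (fejerRieszPoly c ζ).natDegree = 2 * Fintype.card ι := by
  have hP : (∏ j, (X - C (ζ j))).Monic := monic_prod_of_monic _ _ fun j _ => monic_X_sub_C _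
  have hdeg : ((∏ j, (X - C (ζ j))) ^ 2).degree = ((2 * Fintype.card ι : ℕ) : WithBot ℕ) := by
    rw [degree_eq_natDegree (hP.pow 2).ne_zero, natDegree_pow,
      natDegree_prod_of_monic _ _ fun j _ => monic_X_sub_C _]
    simp
  have hlt := (degree_sum_mul_prod_erase_sq_lt (fun j => (c j : ℂ) * ζ j) ζ).trans_eq hdeg.symm
  exact ⟨(hP.pow 2).sub_of_left hlt, natDegree_eq_of_degree_eq_some
    ((degree_sub_eq_left_of_degree_lt hlt).trans hdeg)⟩

theorem eval_zero_fejerRieszPoly (c : ι → ℝ) (ζ : ι → ℂ) :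
    (fejerRieszPoly c ζ).eval 0 = (∏ j, -ζ j) ^ 2 := by
  simp [fejerRieszPoly, eval_prod, eval_finsetSum]

theorem ofReal_fejerRieszSum (c : ι → ℝ) {ζ : ι → ℂ} (hζ : ∀ j, ‖ζ j‖ = 1) {z : ℂ}
    (hz : ‖z‖ = 1) :
    ((∏ j, ‖z - ζ j‖ ^ 2 + ∑ j, c j * ∏ l ∈ univ.erase j, ‖z - ζ l‖ ^ 2 : ℝ) : ℂ) =
      (∏ j, -conj (ζ j)) * z⁻¹ ^ Fintype.card ι * (fejerRieszPoly c ζ).eval z := by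
  have hz0 : z ≠ 0 := by rintro rfl; simp at hz
  set u : ι → ℂ := fun l => -conj (ζ l) * z⁻¹
  have hnorm : ∀ l, ((‖z - ζ l‖ ^ 2 : ℝ) : ℂ) = u l * (z - ζ l) ^ 2 := fun l => by
    have hζ0 : ζ l ≠ 0 := by intro h; simpa [h] using hζ l
    rw [ofReal_norm_sub_sq_of_norm_eq_one hz hζ0, circleInv_of_norm_eq_one (hζ l)]
    ring
  have hu : ∀ j, u j * (-ζ j * z) = 1 := fun j => by
    calc u j * (-ζ j * z) = conj (ζ j) * ζ j * (z⁻¹ * z) := by ring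
      _ = 1 := by rw [Complex.conj_mul', hζ j, inv_mul_cancel₀ hz0]; norm_num
  have herase : ∀ j, ∏ l ∈ univ.erase j, u l = (∏ l, u l) * (-ζ j * z) := fun j => by
    rw [← mul_prod_erase univ u (mem_univ j)]
    linear_combination -(∏ l ∈ univ.erase j, u l) * hu j
  have hprod : ∏ l, u l = (∏ j, -conj (ζ j)) * z⁻¹ ^ Fintype.card ι := by
    rw [prod_mul_distrib, prod_const, card_univ]
  simp only [ofReal_add, ofReal_prod, ofReal_sum, ofReal_mul, hnorm, prod_mul_distrib, herase]
  simp only [fejerRieszPoly, eval_sub, eval_pow, eval_prod, eval_finsetSum, eval_mul, eval_C,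
    eval_X, ← hprod, mul_sub, mul_sum, prod_pow]
  rw [sub_eq_add_neg, ← sum_neg_distrib]
  congr 1
  refine sum_congr rfl fun j _ => ?_
  ring

theorem fejerRieszSum_pos {c : ι → ℝ} (hc : ∀ j, 0 < c j) {ζ : ι → ℂ}
    (hζ : Function.Injective ζ) (z : ℂ) :
    0 < ∏ j, ‖z - ζ j‖ ^ 2 + ∑ j, c j * ∏ l ∈ univ.erase j, ‖z - ζ l‖ ^ 2 := by
  by_cases hz : ∃ j, z = ζ j
  · obtain ⟨j, rfl⟩ := hz
    refine add_pos_of_nonneg_of_pos (by positivity)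
      (sum_pos' (fun i _ => mul_nonneg (hc i).le (by positivity))
      ⟨j, mem_univ j, mul_pos (hc j) (prod_pos fun l hl => ?_)⟩)
    exact pow_pos (norm_pos_iff.2 (sub_ne_zero.2 fun h => (ne_of_mem_erase hl) (hζ h).symm)) 2
  · exact add_pos_of_pos_of_nonneg
      (prod_pos fun j _ => pow_pos (norm_pos_iff.2 fun h => hz ⟨j, sub_eq_zero.1 h⟩) 2)
      (sum_nonneg fun i _ => mul_nonneg (hc i).le (by positivity))

end FejerRiesz

theorem fejer_riesz_outer_factorization_general
    (k : ℕ)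
    (c : Fin k → ℝ) (hc : ∀ j, 0 < c j)
    (ζ : Fin k → ℂ) (hζdist : Function.Injective ζ)
    (hζ : ∀ j, ‖ζ j‖ = 1) :
    ∃ (γ : ℝ) (α : Fin k → ℂ), 0 < γ ∧ (∀ j, 1 < ‖α j‖) ∧
      (∀ z : ℂ, ‖z‖ = 1 →
        (∏ j, ‖z - ζ j‖ ^ 2) +
          ∑ j, c j * ∏ l ∈ Finset.univ.erase j, ‖z - ζ l‖ ^ 2 =
        γ * ∏ j, ‖z - α j‖ ^ 2) ∧
      (∀ (γ' : ℝ) (α' : Fin k → ℂ), 0 < γ' → (∀ j, 1 < ‖α' j‖) →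
        (∀ z : ℂ, ‖z‖ = 1 →
          (∏ j, ‖z - ζ j‖ ^ 2) +
            ∑ j, c j * ∏ l ∈ Finset.univ.erase j, ‖z - ζ l‖ ^ 2 =
          γ' * ∏ j, ‖z - α' j‖ ^ 2) →
        γ' = γ ∧ ∃ σ : Equiv.Perm (Fin k), ∀ j, α' j = α (σ j)) := by
  obtain ⟨hmonic, hdeg⟩ := fejerRieszPoly_monic_and_natDegree c ζ
  have hζ0 : ∀ j, ζ j ≠ 0 := fun j h => by simpa [h] using hζ j
  obtain ⟨γ, s, hγ, hcard, hs, hF⟩ := exists_mul_prod_norm_sub_sq_eq hmonic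
    (by
      rw [eval_zero_fejerRieszPoly]
      exact pow_ne_zero 2 (prod_ne_zero_iff.2 fun j _ => neg_ne_zero.2 (hζ0 j)))
    (by rwa [Fintype.card_fin] at hdeg) (fun z _ => fejerRieszSum_pos hc hζdist z)
    (fun z hz => by rw [ofReal_fejerRieszSum c hζ hz, Fintype.card_fin])
  obtain ⟨α, rfl⟩ := s.exists_fin_map_univ_val_eq hcard
  have hprod : ∀ (β : Fin k → ℂ) (z : ℂ),
      ((univ.val.map β).map fun a => ‖z - a‖ ^ 2).prod = ∏ j, ‖z - β j‖ ^ 2 := fun β z => by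
    rw [Multiset.map_map]; rfl
  refine ⟨γ, α, hγ, fun j => hs _ (Multiset.mem_map_of_mem _ (mem_univ_val j)),
    fun z hz => (hF z hz).trans (by rw [hprod]), fun γ' α' _ hα' hF' => ?_⟩
  obtain ⟨hγγ', hαα'⟩ := eq_of_mul_prod_norm_sub_sq_eq (t := univ.val.map α') hγ.ne' hs
    (by simpa using hα') (by simp) fun z hz => by rw [← hF z hz, hprod, hF' z hz]
  exact ⟨hγγ'.symm, Fintype.exists_perm_of_map_univ_val_eq hαα'.symm⟩

theorem fejer_riesz_outer_factorization
    (k : ℕ) (hk : 1 ≤ k)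
    (c : Fin k → ℝ) (hc : ∀ j, 0 < c j)
    (ζ : Fin k → ℂ) (hζdist : Function.Injective ζ)
    (hζ : ∀ j, ‖ζ j‖ = 1) :
    ∃ (γ : ℝ) (α : Fin k → ℂ), 0 < γ ∧ (∀ j, 1 < ‖α j‖) ∧
      (∀ z : ℂ, ‖z‖ = 1 →
        (∏ j, ‖z - ζ j‖ ^ 2) +
          ∑ j, c j * ∏ l ∈ Finset.univ.erase j, ‖z - ζ l‖ ^ 2 =
        γ * ∏ j, ‖z - α j‖ ^ 2) ∧
      (∀ (γ' : ℝ) (α' : Fin k → ℂ), 0 < γ' → (∀ j, 1 < ‖α' j‖) →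
        (∀ z : ℂ, ‖z‖ = 1 →
          (∏ j, ‖z - ζ j‖ ^ 2) +
            ∑ j, c j * ∏ l ∈ Finset.univ.erase j, ‖z - ζ l‖ ^ 2 =
          γ' * ∏ j, ‖z - α' j‖ ^ 2) →
        γ' = γ ∧ ∃ σ : Equiv.Perm (Fin k), ∀ j, α' j = α (σ j)) :=
  fejer_riesz_outer_factorization_general k c hc ζ hζdist hζ
end
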